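/- Let K ⊂ ∂Z(1) be a compact set containing no full characteristic circle S¹ × {z'}. Then there exists a smooth function H : ℂⁿ → ℝ and an open neighborhood V of K such that dH(JN) < 0 on V ∩ ∂Z(1), where N is the outward normal to ∂Z(1); consequently H strictly decreases along the characteristic flow of ∂Z(1) on a neighborhood of K. -/

import Mathlib

/-! Auxiliary definitions: `fC w M c` is the model function on `ℂ` whose angular
derivative along the rotation field is mostly negative (except on a small arc near `w`),
`DC` is its derivative in the direction `I * z`, and `LC` its full Fréchet derivative. -/

noncomputable def fC (w : ℂ) (M : ℕ) (c : ℝ) (z : ℂ) : ℝ :=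
  ((starRingEnd ℂ) w * z).im * ((2⁻¹ * (1 + ((starRingEnd ℂ) w * z).re))^(M+1) + c)

noncomputable def DC (w : ℂ) (M : ℕ) (c : ℝ) (z : ℂ) : ℝ :=
  ((starRingEnd ℂ) w * z).re * ((2⁻¹ * (1 + ((starRingEnd ℂ) w * z).re))^(M+1) + c)
  - ((starRingEnd ℂ) w * z).im^2 * (((M:ℝ)+1) * (2⁻¹ * (1 + ((starRingEnd ℂ) w * z).re))^M * 2⁻¹)

noncomputable def LC (w : ℂ) (M : ℕ) (c : ℝ) (z : ℂ) : ℂ →L[ℝ] ℝ :=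
  ((starRingEnd ℂ) w * z).im •
      ((((M:ℝ)+1) * (2⁻¹ * (1 + ((starRingEnd ℂ) w * z).re))^M) •
        ((2⁻¹:ℝ) • (Complex.reCLM.comp ((starRingEnd ℂ) w • (ContinuousLinearMap.id ℝ ℂ)))))
    + ((2⁻¹ * (1 + ((starRingEnd ℂ) w * z).re))^(M+1) + c) •
        (Complex.imCLM.comp ((starRingEnd ℂ) w • (ContinuousLinearMap.id ℝ ℂ)))

lemma fC_contDiff (w : ℂ) (M : ℕ) (c : ℝ) : ContDiff ℝ (⊤ : ℕ∞) (fC w M c) := by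
  have h1 : ContDiff ℝ (⊤ : ℕ∞) (fun z : ℂ => (starRingEnd ℂ) w * z) := contDiff_const.mul contDiff_id
  exact (Complex.imCLM.contDiff.comp h1).mul
    (((contDiff_const.mul (contDiff_const.add (Complex.reCLM.contDiff.comp h1))).pow (M+1)).add
      contDiff_const)

lemma DC_continuous (w : ℂ) (M : ℕ) (c : ℝ) : Continuous (DC w M c) := by
  have h1 : Continuous (fun z : ℂ => (starRingEnd ℂ) w * z) := continuous_const.mul continuous_id
  have hre := Complex.continuous_re.comp h1
  have him := Complex.continuous_im.comp h1
  exact (hre.mul (((continuous_const.mul (continuous_const.add hre)).pow (M+1)).add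
      continuous_const)).sub
    ((him.pow 2).mul ((continuous_const.mul
      ((continuous_const.mul (continuous_const.add hre)).pow M)).mul continuous_const))

lemma fC_hasFDerivAt (w : ℂ) (M : ℕ) (c : ℝ) (z : ℂ) :
    HasFDerivAt (fC w M c) (LC w M c z) z := by
  have h_u : HasFDerivAt (fun z : ℂ => (starRingEnd ℂ) w * z)
      ((starRingEnd ℂ) w • (ContinuousLinearMap.id ℝ ℂ)) z :=
    (hasFDerivAt_id z).const_mul ((starRingEnd ℂ) w)
  have h_re : HasFDerivAt (fun z : ℂ => ((starRingEnd ℂ) w * z).re)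
      (Complex.reCLM.comp ((starRingEnd ℂ) w • (ContinuousLinearMap.id ℝ ℂ))) z :=
    (Complex.reCLM.hasFDerivAt.comp z h_u)
  have h_im : HasFDerivAt (fun z : ℂ => ((starRingEnd ℂ) w * z).im)
      (Complex.imCLM.comp ((starRingEnd ℂ) w • (ContinuousLinearMap.id ℝ ℂ))) z :=
    (Complex.imCLM.hasFDerivAt.comp z h_u)
  have h_q : HasFDerivAt (fun z : ℂ => 2⁻¹ * (1 + ((starRingEnd ℂ) w * z).re))
      ((2⁻¹:ℝ) • (Complex.reCLM.comp ((starRingEnd ℂ) w • (ContinuousLinearMap.id ℝ ℂ)))) z :=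
    (h_re.const_add 1).const_mul 2⁻¹
  have h_pow : HasFDerivAt (fun z : ℂ => (2⁻¹ * (1 + ((starRingEnd ℂ) w * z).re))^(M+1))
      ((((M:ℝ)+1) * (2⁻¹ * (1 + ((starRingEnd ℂ) w * z).re))^M) •
        ((2⁻¹:ℝ) • (Complex.reCLM.comp ((starRingEnd ℂ) w • (ContinuousLinearMap.id ℝ ℂ))))) z := by
    have := (hasDerivAt_pow (M+1)
      (2⁻¹ * (1 + ((starRingEnd ℂ) w * z).re))).comp_hasFDerivAt z h_q
    simpa [Function.comp_def] using this
  exact h_im.mul (h_pow.add_const c)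

lemma LC_apply (w : ℂ) (M : ℕ) (c : ℝ) (z : ℂ) :
    LC w M c z (Complex.I * z) = DC w M c z := by
  simp [LC, DC, ContinuousLinearMap.smul_apply, ContinuousLinearMap.comp_apply,
    Complex.mul_re, Complex.mul_im, Complex.I_re, Complex.I_im, smul_eq_mul]
  ring

lemma uc (w z : ℂ) (hw : ‖w‖ = 1) (hz : ‖z‖ = 1) :
    ((starRingEnd ℂ) w * z).re^2 + ((starRingEnd ℂ) w * z).im^2 = 1 := by
  have h := Complex.sq_norm ((starRingEnd ℂ) w * z)
  rw [norm_mul, Complex.norm_conj, hw, hz, one_mul, one_pow, Complex.normSq_apply] at h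
  nlinarith [h]

lemma re_bound (w z : ℂ) (hw : ‖w‖ = 1) (hz : ‖z‖ = 1) (r : ℝ)
    (hr : 0 ≤ r) (h : r ≤ dist z w) :
    ((starRingEnd ℂ) w * z).re ≤ 1 - 2*(r^2/4) := by
  have hd : dist z w = ‖z - w‖ := Complex.dist_eq z w
  have h2 : r^2 ≤ ‖z-w‖^2 := by
    rw [← hd]; exact pow_le_pow_left₀ hr h 2
  rw [Complex.sq_norm, Complex.normSq_apply] at h2
  have hz2 : z.re*z.re + z.im*z.im = 1 := by
    have := Complex.sq_norm z
    rw [hz, Complex.normSq_apply] at this; nlinarith [this]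
  have hw2 : w.re*w.re + w.im*w.im = 1 := by
    have := Complex.sq_norm w
    rw [hw, Complex.normSq_apply] at this; nlinarith [this]
  simp only [Complex.sub_re, Complex.sub_im] at h2
  simp only [Complex.mul_re, Complex.conj_re, Complex.conj_im]
  nlinarith [h2, hz2, hw2]

lemma key_neg (δ : ℝ) (hδ0 : 0 < δ) (M : ℕ) (hM : 2/δ ≤ (M:ℝ)+1)
    (x y : ℝ) (hcirc : x^2 + y^2 = 1) (hx : x ≤ 1 - 2*δ) :
    x * ((2⁻¹*(1+x))^(M+1) + (4⁻¹:ℝ)^(M+2)) - y^2*(((M:ℝ)+1)*(2⁻¹*(1+x))^M*2⁻¹)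
      ≤ -((4⁻¹:ℝ)^(M+2)/2) := by
  have hx1 : -1 ≤ x := by nlinarith
  have hxle : x ≤ 1 := by nlinarith
  have hy2 : y^2 = 1 - x^2 := by linarith
  have hq0 : (0:ℝ) ≤ 2⁻¹*(1+x) := by linarith
  have hEq : x * ((2⁻¹*(1+x))^(M+1) + (4⁻¹:ℝ)^(M+2))
        - y^2*(((M:ℝ)+1)*(2⁻¹*(1+x))^M*2⁻¹)
      = (2⁻¹*(1+x))^M*(2⁻¹*(1+x))*(x - ((M:ℝ)+1)*(1-x)) + (4⁻¹:ℝ)^(M+2)*x := by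
    rw [hy2]; ring
  rw [hEq]
  have hδx : 2*δ ≤ 1 - x := by linarith
  have hM0 : (0:ℝ) ≤ (M:ℝ)+1 := by positivity
  have h1 : (2/δ)*(2*δ) ≤ ((M:ℝ)+1)*(1-x) := by
    apply mul_le_mul hM hδx (by linarith) hM0
  have h1' : (2/δ)*(2*δ) = 4 := by field_simp; ring
  have hB : x - ((M:ℝ)+1)*(1-x) ≤ -3 := by rw [h1'] at h1; linarith
  have hc0 : (0:ℝ) < (4⁻¹:ℝ)^(M+2) := by positivity
  have hA0 : 0 ≤ (2⁻¹*(1+x))^M * (2⁻¹*(1+x)) := mul_nonneg (pow_nonneg hq0 M) hq0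
  rcases le_or_gt (-2⁻¹ : ℝ) x with hx0 | hx0
  · have hqq : (4⁻¹:ℝ) ≤ 2⁻¹*(1+x) := by linarith
    have hP : (4⁻¹:ℝ)^(M+1) ≤ (2⁻¹*(1+x))^M * (2⁻¹*(1+x)) := by
      rw [← pow_succ]; exact pow_le_pow_left₀ (by norm_num) hqq (M+1)
    have h2 : (2⁻¹*(1+x))^M*(2⁻¹*(1+x))*(x - ((M:ℝ)+1)*(1-x)) ≤ (4⁻¹:ℝ)^(M+1)*(-3) := by
      calc (2⁻¹*(1+x))^M*(2⁻¹*(1+x))*(x - ((M:ℝ)+1)*(1-x))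
          ≤ (2⁻¹*(1+x))^M*(2⁻¹*(1+x))*(-3) := mul_le_mul_of_nonneg_left hB hA0
        _ ≤ (4⁻¹:ℝ)^(M+1)*(-3) := by linarith
    have h3 : (4⁻¹:ℝ)^(M+2)*x ≤ (4⁻¹:ℝ)^(M+2) := by nlinarith
    have h4 : (4⁻¹:ℝ)^(M+1) = 4*(4⁻¹:ℝ)^(M+2) := by rw [pow_succ]; ring
    nlinarith
  · have h2 : (2⁻¹*(1+x))^M*(2⁻¹*(1+x))*(x - ((M:ℝ)+1)*(1-x)) ≤ 0 :=
      mul_nonpos_of_nonneg_of_nonpos hA0 (by linarith)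
    nlinarith

lemma DC_le_neg (w z : ℂ) (hw : ‖w‖ = 1) (hz : ‖z‖ = 1)
    (δ : ℝ) (hδ0 : 0 < δ) (M : ℕ) (hM : 2/δ ≤ (M:ℝ)+1)
    (hx : ((starRingEnd ℂ) w * z).re ≤ 1 - 2*δ) :
    DC w M ((4⁻¹:ℝ)^(M+2)) z ≤ -((4⁻¹:ℝ)^(M+2)/2) := by
  have := key_neg δ hδ0 M hM ((starRingEnd ℂ) w * z).re ((starRingEnd ℂ) w * z).im
    (uc w z hw hz) hx
  simpa [DC] using this

lemma DC_le_two (w : ℂ) (M : ℕ) (c : ℝ) (hc0 : 0 ≤ c) (hc1 : c ≤ 1) (z : ℂ)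
    (hw : ‖w‖ = 1) (hz : ‖z‖ = 1) : DC w M c z ≤ 2 := by
  have h := uc w z hw hz
  unfold DC
  set x := ((starRingEnd ℂ) w * z).re with hxdef
  set y := ((starRingEnd ℂ) w * z).im with hydef
  have hx1 : x ≤ 1 := by nlinarith [sq_nonneg y]
  have hxm : -1 ≤ x := by nlinarith [sq_nonneg y]
  have hq0 : (0:ℝ) ≤ 2⁻¹*(1+x) := by linarith
  have hq1 : 2⁻¹*(1+x) ≤ 1 := by linarith
  have hp1 : (2⁻¹*(1+x))^(M+1) ≤ 1 := pow_le_one₀ hq0 hq1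
  have hp0 : (0:ℝ) ≤ (2⁻¹*(1+x))^(M+1) := pow_nonneg hq0 (M+1)
  have hsec : 0 ≤ y^2 * (((M:ℝ)+1) * (2⁻¹*(1+x))^M * 2⁻¹) := by positivity
  nlinarith

/-! Quadratic "distance" function on `Fin m → ℂ` and the Gaussian weights built from it. -/

noncomputable def QF (m : ℕ) (v z' : Fin m → ℂ) : ℝ :=
  ∑ i, ((z' i - v i).re^2 + (z' i - v i).im^2)

lemma QF_contDiff (m : ℕ) (v : Fin m → ℂ) : ContDiff ℝ (⊤ : ℕ∞) (QF m v) := by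
  refine ContDiff.sum (fun i _ => ?_)
  have hp : ContDiff ℝ (⊤ : ℕ∞) (fun z' : Fin m → ℂ => z' i - v i) :=
    (ContinuousLinearMap.proj i : (Fin m → ℂ) →L[ℝ] ℂ).contDiff.sub contDiff_const
  exact ((Complex.reCLM.contDiff.comp hp).pow 2).add ((Complex.imCLM.contDiff.comp hp).pow 2)

lemma QF_term_eq (m : ℕ) (v z' : Fin m → ℂ) (i : Fin m) :
    (z' i - v i).re^2 + (z' i - v i).im^2 = dist (z' i) (v i)^2 := by
  rw [Complex.dist_eq, Complex.sq_norm, Complex.normSq_apply]; ring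

lemma QF_nonneg_term (m : ℕ) (v z' : Fin m → ℂ) :
    ∀ i ∈ Finset.univ, (0:ℝ) ≤ (z' i - v i).re^2 + (z' i - v i).im^2 :=
  fun i _ => by positivity

lemma QF_nonneg (m : ℕ) (v z' : Fin m → ℂ) : 0 ≤ QF m v z' :=
  Finset.sum_nonneg (QF_nonneg_term m v z')

lemma QF_le_of_dist (m : ℕ) (v z' : Fin m → ℂ) (ρ : ℝ) (hρ : 0 ≤ ρ) (h : dist z' v ≤ ρ) :
    QF m v z' ≤ m * ρ^2 := by
  have hb : ∀ i ∈ Finset.univ, ((z' i - v i).re^2 + (z' i - v i).im^2) ≤ ρ^2 := by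
    intro i _
    rw [QF_term_eq]
    exact pow_le_pow_left₀ dist_nonneg (le_trans (dist_le_pi_dist z' v i) h) 2
  calc QF m v z' ≤ ∑ _i : Fin m, ρ^2 := Finset.sum_le_sum hb
    _ = m * ρ^2 := by simp [Finset.sum_const, mul_comm]

lemma QF_ge (m : ℕ) (v z' : Fin m → ℂ) (r : ℝ) (hr : 0 < r) (h : ¬ dist z' v < r) :
    r^2 ≤ QF m v z' := by
  rw [dist_pi_lt_iff hr] at h
  push_neg at h
  obtain ⟨i, hi⟩ := h
  calc r^2 ≤ dist (z' i) (v i)^2 := pow_le_pow_left₀ hr.le hi 2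
    _ = (z' i - v i).re^2 + (z' i - v i).im^2 := (QF_term_eq m v z' i).symm
    _ ≤ QF m v z' := Finset.single_le_sum (QF_nonneg_term m v z') (Finset.mem_univ i)

set_option maxHeartbeats 1000000 in
/-- If `K` is a compact subset of the boundary `∂Z(1) = {|z₁| = 1}` of the cylinder
`Z(1) ⊂ ℂ × ℂᵐ` containing no full characteristic circle `S¹ × {z'}`, then there is a
smooth function `H` and an open neighborhood `V` of `K` on which `dH(JN) < 0` along
`∂Z(1)`, where `J N(p) = (i z₁, 0)` is the characteristic direction (J times the outward
normal); i.e. `H` strictly decreases along the characteristic flow near `K`. -/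
theorem stmt5 (m : ℕ) (K : Set (ℂ × (Fin m → ℂ)))
    (hK : IsCompact K) (hKsub : K ⊆ {p : ℂ × (Fin m → ℂ) | ‖p.1‖ = 1})
    (hnoleaf : ∀ z' : Fin m → ℂ,
      ¬ ({p : ℂ × (Fin m → ℂ) | ‖p.1‖ = 1 ∧ p.2 = z'} ⊆ K)) :
    ∃ (H : ℂ × (Fin m → ℂ) → ℝ) (V : Set (ℂ × (Fin m → ℂ))),
      ContDiff ℝ (⊤ : ℕ∞) H ∧ IsOpen V ∧ K ⊆ V ∧
      ∀ p ∈ V, ‖p.1‖ = 1 →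
        fderiv ℝ H p (Complex.I * p.1, 0) < 0 := by
  classical
  rcases K.eq_empty_or_nonempty with rfl | hKne
  · exact ⟨fun _ => 0, ∅, contDiff_const, isOpen_empty, Set.empty_subset _,
      fun p hp => absurd hp (Set.notMem_empty p)⟩
  have hKc : IsClosed K := hK.isClosed
  -- basic data: for each point of K, a unit w and a radius r with a product ball missing K
  have hdata : ∀ p : K, ∃ w : ℂ, ‖w‖ = 1 ∧ ∃ r : ℝ, 0 < r ∧ r ≤ 1 ∧
      (Metric.ball w r ×ˢ Metric.ball (p : ℂ × (Fin m → ℂ)).2 r) ∩ K = ∅ := by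
    intro p
    obtain ⟨q, hq, hqK⟩ := Set.not_subset.1 (hnoleaf (p : ℂ × (Fin m → ℂ)).2)
    obtain ⟨hq1, hq2⟩ := hq
    obtain ⟨r, hr0, hball⟩ := Metric.isOpen_iff.1 hKc.isOpen_compl q hqK
    refine ⟨q.1, hq1, min r 1, by positivity, min_le_right _ _, ?_⟩
    rw [Set.eq_empty_iff_forall_notMem]
    rintro x ⟨hx1, hx2⟩
    rw [← hq2] at hx1
    rw [ball_prod_same] at hx1
    have : x ∈ Metric.ball q r := by
      refine Metric.ball_subset_ball (min_le_left r 1) ?_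
      simpa using hx1
    exact hball this hx2
  choose w hw r hr0 hr1 hrK using hdata
  -- exponent data
  have hMdata : ∀ p : K, ∃ M : ℕ, 2/((r p)^2/4) ≤ (M:ℝ)+1 := by
    intro p
    refine ⟨⌈2/((r p)^2/4)⌉₊, ?_⟩
    have := Nat.le_ceil (2/((r p)^2/4))
    linarith
  choose Mn hMn using hMdata
  -- covering by small balls in the z' variable
  have hρ0 : ∀ p : K, 0 < r p / (m+1) := fun p => by
    have := hr0 p; positivity
  obtain ⟨t, ht⟩ := hK.elim_finite_subcover
    (fun p : K => {q : ℂ × (Fin m → ℂ) | dist q.2 (p : ℂ × (Fin m → ℂ)).2 < r p / (m+1)})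
    (fun p => Metric.isOpen_ball.preimage continuous_snd)
    (fun x hx => Set.mem_iUnion.2 ⟨⟨x, hx⟩, by simp [hρ0 ⟨x, hx⟩]⟩)
  have htne : t.Nonempty := by
    rcases hKne with ⟨x, hx⟩
    obtain ⟨j, hj⟩ := Set.mem_iUnion.1 (ht hx)
    obtain ⟨hjt, -⟩ := Set.mem_iUnion.1 hj
    exact ⟨j, hjt⟩
  -- minimum of the negativity margins
  obtain ⟨εm, hεm0, hεmle⟩ : ∃ εm : ℝ, 0 < εm ∧
      ∀ j ∈ t, εm ≤ (4⁻¹:ℝ)^(Mn j + 2)/2 := by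
    refine ⟨t.inf' htne (fun p => (4⁻¹:ℝ)^(Mn p + 2)/2), ?_, ?_⟩
    · rw [Finset.lt_inf'_iff]
      exact fun j _ => by positivity
    · exact fun j hj => Finset.inf'_le _ hj
  -- a small positive θ
  obtain ⟨θ, hθ0, hθ1, hθsmall⟩ : ∃ θ : ℝ, 0 < θ ∧ θ ≤ 1 ∧ 2*(t.card:ℝ)*θ < εm := by
    refine ⟨min (εm/(2*(t.card:ℝ)+1)) 2⁻¹, lt_min (by positivity) (by norm_num),
      le_trans (min_le_right _ _) (by norm_num), ?_⟩
    have h1 : min (εm/(2*(t.card:ℝ)+1)) 2⁻¹ ≤ εm/(2*(t.card:ℝ)+1) := min_le_left _ _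
    rw [le_div_iff₀ (by positivity)] at h1
    have h2 : 0 < min (εm/(2*(t.card:ℝ)+1)) 2⁻¹ := lt_min (by positivity) (by norm_num)
    nlinarith
  -- the Gaussian decay rate
  obtain ⟨lam, hlam0, hexp2, hexp1⟩ : ∃ lam : ℝ, 0 ≤ lam ∧
      Real.exp (-lam) = θ^2 ∧ Real.exp (-(lam/2)) = θ := by
    refine ⟨-2 * Real.log θ, ?_, ?_, ?_⟩
    · have := Real.log_nonpos hθ0.le hθ1
      linarith
    · have h1 : -(-2 * Real.log θ) = Real.log θ + Real.log θ := by ring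
      rw [h1, Real.exp_add, Real.exp_log hθ0]; ring
    · have h1 : -((-2 * Real.log θ)/2) = Real.log θ := by ring
      rw [h1, Real.exp_log hθ0]
  -- the Gaussian weights
  set ψ : K → (Fin m → ℂ) → ℝ :=
    fun p z' => Real.exp (-(lam/(r p)^2 * QF m (p : ℂ × (Fin m → ℂ)).2 z')) with hψdef
  have hψcd : ∀ p : K, ContDiff ℝ (⊤ : ℕ∞) (ψ p) := fun p =>
    Real.contDiff_exp.comp ((contDiff_const.mul (QF_contDiff m _)).neg)
  have hψpos : ∀ p z', 0 < ψ p z' := fun p z' => Real.exp_pos _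
  -- the function and its "angular derivative"
  set H : ℂ × (Fin m → ℂ) → ℝ :=
    fun q => ∑ p ∈ t, ψ p q.2 * fC (w p) (Mn p) ((4⁻¹:ℝ)^(Mn p + 2)) q.1 with hHdef
  set G : ℂ × (Fin m → ℂ) → ℝ :=
    fun q => ∑ p ∈ t, ψ p q.2 * DC (w p) (Mn p) ((4⁻¹:ℝ)^(Mn p + 2)) q.1 with hGdef
  have hGcont : Continuous G := by
    apply continuous_finset_sum
    intro p _
    exact ((hψcd p).continuous.comp continuous_snd).mul
      ((DC_continuous (w p) (Mn p) _).comp continuous_fst)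
  -- derivative of H in the rotation direction equals G
  have hfderiv : ∀ q : ℂ × (Fin m → ℂ), fderiv ℝ H q (Complex.I * q.1, 0) = G q := by
    intro q
    have hHder : HasFDerivAt H
        (∑ p ∈ t, (ψ p q.2 • ((LC (w p) (Mn p) ((4⁻¹:ℝ)^(Mn p + 2)) q.1).comp
            (ContinuousLinearMap.fst ℝ ℂ (Fin m → ℂ)))
          + fC (w p) (Mn p) ((4⁻¹:ℝ)^(Mn p + 2)) q.1 • ((fderiv ℝ (ψ p) q.2).comp
            (ContinuousLinearMap.snd ℝ ℂ (Fin m → ℂ))))) q := by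
      apply HasFDerivAt.fun_sum
      intro p _
      have hψd : HasFDerivAt (fun q : ℂ × (Fin m → ℂ) => ψ p q.2)
          ((fderiv ℝ (ψ p) q.2).comp (ContinuousLinearMap.snd ℝ ℂ (Fin m → ℂ))) q :=
        (((hψcd p).differentiable (by simp) q.2).hasFDerivAt).comp q hasFDerivAt_snd
      have hfd : HasFDerivAt (fun q : ℂ × (Fin m → ℂ) =>
            fC (w p) (Mn p) ((4⁻¹:ℝ)^(Mn p + 2)) q.1)
          ((LC (w p) (Mn p) ((4⁻¹:ℝ)^(Mn p + 2)) q.1).comp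
            (ContinuousLinearMap.fst ℝ ℂ (Fin m → ℂ))) q :=
        (fC_hasFDerivAt (w p) (Mn p) _ q.1).comp q hasFDerivAt_fst
      exact hψd.mul hfd
    rw [hHder.fderiv, hGdef]
    simp only [ContinuousLinearMap.sum_apply, ContinuousLinearMap.add_apply,
      ContinuousLinearMap.smul_apply, ContinuousLinearMap.comp_apply,
      ContinuousLinearMap.coe_fst', ContinuousLinearMap.coe_snd', map_zero,
      smul_eq_mul, mul_zero, add_zero]
    exact Finset.sum_congr rfl (fun p _ => by rw [LC_apply])
  refine ⟨H, G ⁻¹' (Set.Iio 0), ?_, ?_, ?_, ?_⟩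
  · apply ContDiff.sum
    intro p _
    exact ((hψcd p).comp contDiff_snd).mul ((fC_contDiff (w p) (Mn p) _).comp contDiff_fst)
  · exact hGcont.isOpen_preimage _ isOpen_Iio
  · -- K ⊆ V : the main estimate
    intro x hx
    have hx1 : ‖x.1‖ = 1 := hKsub hx
    obtain ⟨j₀, hj₀⟩ := Set.mem_iUnion.1 (ht hx)
    obtain ⟨hj₀t, hj₀U⟩ := Set.mem_iUnion.1 hj₀
    have hxU : dist x.2 (j₀ : ℂ × (Fin m → ℂ)).2 < r j₀ / (m+1) := hj₀U
    -- a generic bound for a "good" index j (x.2 within r j of the center)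
    have hgood : ∀ j : K, j ∈ t → dist x.2 (j : ℂ × (Fin m → ℂ)).2 < r j →
        DC (w j) (Mn j) ((4⁻¹:ℝ)^(Mn j + 2)) x.1 ≤ -((4⁻¹:ℝ)^(Mn j + 2)/2) := by
      intro j _ hdist
      have hx1ball : x.1 ∉ Metric.ball (w j) (r j) := by
        intro hmem
        have hmem2 : x ∈ (Metric.ball (w j) (r j) ×ˢ
            Metric.ball (j : ℂ × (Fin m → ℂ)).2 (r j)) ∩ K :=
          ⟨Set.mem_prod.2 ⟨hmem, by simpa [Metric.mem_ball] using hdist⟩, hx⟩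
        rw [hrK j] at hmem2
        exact hmem2
      have hd : r j ≤ dist x.1 (w j) := by
        by_contra hcon
        push_neg at hcon
        exact hx1ball (Metric.mem_ball.2 hcon)
      have hre := re_bound (w j) x.1 (hw j) hx1 (r j) (hr0 j).le hd
      exact DC_le_neg (w j) x.1 (hw j) hx1 ((r j)^2/4)
        (by have := hr0 j; positivity) (Mn j) (hMn j) hre
    -- bound on all terms
    have hother : ∀ j : K, j ∈ t →
        ψ j x.2 * DC (w j) (Mn j) ((4⁻¹:ℝ)^(Mn j + 2)) x.1 ≤ 2*θ^2 := by
      intro j hjt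
      by_cases hdist : dist x.2 (j : ℂ × (Fin m → ℂ)).2 < r j
      · have h1 := hgood j hjt hdist
        have h2 : ψ j x.2 * DC (w j) (Mn j) ((4⁻¹:ℝ)^(Mn j + 2)) x.1 ≤ 0 :=
          mul_nonpos_of_nonneg_of_nonpos (hψpos j x.2).le
            (by have : (0:ℝ) < (4⁻¹:ℝ)^(Mn j + 2)/2 := by positivity
                linarith)
        nlinarith [sq_nonneg θ]
      · -- far away: weight is at most θ²
        have hQ : (r j)^2 ≤ QF m (j : ℂ × (Fin m → ℂ)).2 x.2 := QF_ge m _ _ _ (hr0 j) hdist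
        have hψle : ψ j x.2 ≤ θ^2 := by
          rw [hψdef, ← hexp2]
          apply Real.exp_le_exp.2
          have h3 : lam/(r j)^2 * (r j)^2 ≤ lam/(r j)^2 * QF m (j : ℂ × (Fin m → ℂ)).2 x.2 :=
            mul_le_mul_of_nonneg_left hQ (div_nonneg hlam0 (sq_nonneg _))
          have h4 : lam/(r j)^2 * (r j)^2 = lam :=
            div_mul_cancel₀ lam (pow_pos (hr0 j) 2).ne'
          linarith
        have hDC : DC (w j) (Mn j) ((4⁻¹:ℝ)^(Mn j + 2)) x.1 ≤ 2 :=
          DC_le_two (w j) (Mn j) ((4⁻¹:ℝ)^(Mn j + 2)) (by positivity)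
            (pow_le_one₀ (by norm_num : (0:ℝ) ≤ 4⁻¹) (by norm_num : (4⁻¹:ℝ) ≤ 1)) x.1 (hw j) hx1
        calc ψ j x.2 * DC (w j) (Mn j) ((4⁻¹:ℝ)^(Mn j + 2)) x.1 ≤ ψ j x.2 * 2 :=
              mul_le_mul_of_nonneg_left hDC (hψpos j x.2).le
          _ ≤ θ^2 * 2 := by linarith
          _ = 2*θ^2 := by ring
    -- the term j₀ is very negative
    have hj₀r : dist x.2 (j₀ : ℂ × (Fin m → ℂ)).2 < r j₀ := by
      apply lt_of_lt_of_le hxU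
      rw [div_le_iff₀ (by positivity : (0:ℝ) < (m:ℝ)+1)]
      nlinarith [hr0 j₀, mul_nonneg (hr0 j₀).le (by positivity : (0:ℝ) ≤ (m:ℝ))]
    have hterm0 : ψ j₀ x.2 * DC (w j₀) (Mn j₀) ((4⁻¹:ℝ)^(Mn j₀ + 2)) x.1 ≤ θ * (-(εm)) := by
      have hDC0 := hgood j₀ hj₀t hj₀r
      have hεmle0 : εm ≤ (4⁻¹:ℝ)^(Mn j₀ + 2)/2 := hεmle j₀ hj₀t
      have hQ2 : QF m (j₀ : ℂ × (Fin m → ℂ)).2 x.2 ≤ (r j₀)^2/2 := by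
        have h5 : QF m (j₀ : ℂ × (Fin m → ℂ)).2 x.2 ≤ m * (r j₀ / (m+1))^2 :=
          QF_le_of_dist m _ _ _ (hρ0 j₀).le hxU.le
        have h6 : (m:ℝ) * (r j₀ / (m+1))^2 ≤ (r j₀)^2/2 := by
          have hkey : (r j₀ / ((m:ℝ)+1))^2 * ((m:ℝ)+1)^2 = (r j₀)^2 := by
            field_simp
          nlinarith [sq_nonneg (r j₀ / ((m:ℝ)+1)),
            mul_nonneg (sq_nonneg (r j₀ / ((m:ℝ)+1))) (by positivity : (0:ℝ) ≤ (m:ℝ)^2+1)]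
        linarith
      have hψge : θ ≤ ψ j₀ x.2 := by
        rw [hψdef, ← hexp1]
        apply Real.exp_le_exp.2
        have h8 : lam/(r j₀)^2 * QF m (j₀ : ℂ × (Fin m → ℂ)).2 x.2
            ≤ lam/(r j₀)^2 * ((r j₀)^2/2) :=
          mul_le_mul_of_nonneg_left hQ2 (div_nonneg hlam0 (sq_nonneg _))
        have h9 : lam/(r j₀)^2 * ((r j₀)^2/2) = lam/2 := by
          have h9' : lam/(r j₀)^2 * ((r j₀)^2/2) = (lam/(r j₀)^2 * (r j₀)^2)/2 := by ring
          rw [h9', div_mul_cancel₀ lam (pow_pos (hr0 j₀) 2).ne']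
        linarith
      have hεf0' : (0:ℝ) < (4⁻¹:ℝ)^(Mn j₀ + 2)/2 := by positivity
      calc ψ j₀ x.2 * DC (w j₀) (Mn j₀) ((4⁻¹:ℝ)^(Mn j₀ + 2)) x.1
          ≤ θ * DC (w j₀) (Mn j₀) ((4⁻¹:ℝ)^(Mn j₀ + 2)) x.1 :=
            mul_le_mul_of_nonpos_right hψge (by linarith)
        _ ≤ θ * (-(εm)) := mul_le_mul_of_nonneg_left (by linarith) hθ0.le
    -- sum up
    have hsplit : G x = ψ j₀ x.2 * DC (w j₀) (Mn j₀) ((4⁻¹:ℝ)^(Mn j₀ + 2)) x.1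
        + ∑ j ∈ t.erase j₀, ψ j x.2 * DC (w j) (Mn j) ((4⁻¹:ℝ)^(Mn j + 2)) x.1 := by
      rw [hGdef]
      exact (Finset.add_sum_erase t _ hj₀t).symm
    have hrest : ∑ j ∈ t.erase j₀, ψ j x.2 * DC (w j) (Mn j) ((4⁻¹:ℝ)^(Mn j + 2)) x.1
        ≤ ((t.erase j₀).card : ℝ) * (2*θ^2) := by
      have h11 := Finset.sum_le_card_nsmul (t.erase j₀)
        (fun j => ψ j x.2 * DC (w j) (Mn j) ((4⁻¹:ℝ)^(Mn j + 2)) x.1) (2*θ^2)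
        (fun j hj => hother j (Finset.mem_of_mem_erase hj))
      simpa [nsmul_eq_mul] using h11
    have hcard : ((t.erase j₀).card : ℝ) ≤ (t.card:ℝ) :=
      Nat.cast_le.2 (Finset.card_le_card (Finset.erase_subset j₀ t))
    show G x ∈ Set.Iio (0:ℝ)
    rw [Set.mem_Iio, hsplit]
    have h10 : ((t.erase j₀).card : ℝ) * (2*θ^2) ≤ (t.card:ℝ) * (2*θ^2) :=
      mul_le_mul_of_nonneg_right hcard (by positivity)
    have h12 : 2*(t.card:ℝ)*θ*θ < εm*θ := by
      exact mul_lt_mul_of_pos_right hθsmall hθ0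
    nlinarith
  · intro p hp _
    rw [hfderiv p]
    exact hp
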